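/- Let λ : ℤ → ℝ be finitely supported and let λ' be its coarse scaling coefficients under the 6.2 forward wavelet transform. Then Σ_{j∈ℤ} j·λ(j) = 4·Σ_{k∈ℤ} k·λ'(k). (Conservation of the first discrete moment across levels by the lifted sixth-order interpolating wavelet: with grid coordinates x_{L+1,j} = j·2^{-(L+1)} on the fine level and x_{L,k} = k·2^{-L} on the coarse level, this is Σ_j λ(j)·x_{L+1,j} = 2·Σ_k λ'(k)·x_{L,k}.) -/

import Mathlib

/-!
Split `λ` into its even samples `e` and odd samples `o`. Each lifting step adds to one of them a
filter with taps `c i` at offsets `t i`, and such a filter acts on the zeroth and first moments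
`M₀`, `M₁` only through `∑ c i` and `∑ c i * t i`. For the 6.2 predictor these are `-1` and `-1/2`
(it reproduces affine sequences), for the updater `1/2` and `-1/4`; with them
`4 M₁(λ') = 2 M₁(e) + 2 M₁(o) + M₀(o) = M₁(λ)`.
-/

open Function

noncomputable section

variable {R : Type*} [CommRing R]

def firstMoment (f : ℤ → R) : R := ∑ᶠ m : ℤ, (m : R) * f m

def shiftCombination {ι : Type*} [Fintype ι] (c : ι → R) (t : ι → ℤ) (g : ℤ → R) (k : ℤ) :
    R :=
  ∑ i, c i * g (k + t i)

theorem finsum_comp_add_right {M : Type*} [AddCommMonoid M] (f : ℤ → M) (t : ℤ) :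
    ∑ᶠ m, f (m + t) = ∑ᶠ m, f m :=
  finsum_comp_equiv (Equiv.addRight t)

theorem finsum_eq_finsum_even_add_finsum_odd {M : Type*} [AddCommMonoid M] {f : ℤ → M}
    (hf : f.HasFiniteSupport) : ∑ᶠ j, f j = ∑ᶠ k, f (2 * k) + ∑ᶠ k, f (2 * k + 1) := by
  have hpair := hf.comp_of_injective (Int.divModEquiv 2).symm.injective
  rw [← finsum_comp_equiv (Int.divModEquiv 2).symm, ← comp_def, finsum_curry _ hpair]
  simp only [finsum_eq_sum_of_fintype, Fin.sum_univ_two, comp_apply, Int.divModEquiv_symm_apply]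
  rw [← finsum_add_distrib (by fun_prop (disch := intro a b h; simp_all))
    (by fun_prop (disch := intro a b h; simp_all))]
  refine finsum_congr fun k => ?_
  norm_num [mul_comm]

theorem firstMoment_add {f g : ℤ → R} (hf : f.HasFiniteSupport) (hg : g.HasFiniteSupport) :
    firstMoment (f + g) = firstMoment f + firstMoment g := by
  simp only [firstMoment, Pi.add_apply, mul_add]
  exact finsum_add_distrib (by fun_prop) (by fun_prop)

theorem firstMoment_eq_even_add_odd {f : ℤ → R} (hf : f.HasFiniteSupport) :
    firstMoment f = 2 * firstMoment (fun k => f (2 * k)) + 2 * firstMoment (fun k => f (2 * k + 1))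
      + ∑ᶠ k, f (2 * k + 1) := by
  rw [firstMoment, finsum_eq_finsum_even_add_finsum_odd (by fun_prop), firstMoment, firstMoment,
    mul_finsum' _ _ (by fun_prop (disch := intro a b h; simp_all)),
    mul_finsum' _ _ (by fun_prop (disch := intro a b h; simp_all)), add_assoc,
    ← finsum_add_distrib (f := fun k : ℤ => 2 * ((k : R) * f (2 * k + 1)))
      (by fun_prop (disch := intro a b h; simp_all)) (by fun_prop (disch := intro a b h; simp_all))]
  congr 1 <;> refine finsum_congr fun k => ?_ <;> push_cast <;> ring

theorem firstMoment_comp_add_right {g : ℤ → R} (hg : g.HasFiniteSupport) (t : ℤ) :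
    firstMoment (fun m => g (m + t)) = firstMoment g - t * ∑ᶠ m, g m := by
  calc firstMoment (fun m => g (m + t))
      = ∑ᶠ m : ℤ, (((m + t : ℤ) : R) * g (m + t) - t * g (m + t)) := by
        unfold firstMoment; congr! 2; push_cast; ring
    _ = ∑ᶠ m : ℤ, ((m : R) * g m - t * g m) :=
        finsum_comp_add_right (fun m : ℤ => (m : R) * g m - t * g m) t
    _ = firstMoment g - t * ∑ᶠ m, g m := by
        rw [finsum_sub_distrib (by fun_prop) (by fun_prop), mul_finsum' _ _ hg]; rfl

variable {ι : Type*} [Fintype ι] (c : ι → R) (t : ι → ℤ) {g : ℤ → R}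

theorem hasFiniteSupport_shiftCombination (hg : g.HasFiniteSupport) :
    (shiftCombination c t g).HasFiniteSupport := by
  unfold shiftCombination
  fun_prop (disch := exact add_left_injective _)

theorem finsum_shiftCombination (hg : g.HasFiniteSupport) :
    ∑ᶠ k, shiftCombination c t g k = (∑ i, c i) * ∑ᶠ m, g m := by
  unfold shiftCombination
  rw [finsum_sum_comm _ _ (fun i _ => by fun_prop (disch := exact add_left_injective _)),
    Finset.sum_mul]
  refine Finset.sum_congr rfl fun i _ => ?_
  rw [← mul_finsum' _ _ (by fun_prop (disch := exact add_left_injective _)),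
    finsum_comp_add_right g]

theorem firstMoment_shiftCombination (hg : g.HasFiniteSupport) :
    firstMoment (shiftCombination c t g) =
      (∑ i, c i) * firstMoment g - (∑ i, c i * t i) * ∑ᶠ m, g m := by
  rw [firstMoment]
  simp only [shiftCombination, Finset.mul_sum]
  rw [finsum_sum_comm _ _ (fun i _ => by fun_prop (disch := exact add_left_injective _)),
    Finset.sum_mul, Finset.sum_mul, ← Finset.sum_sub_distrib]
  refine Finset.sum_congr rfl fun i _ => ?_
  have hshift : ∑ᶠ m : ℤ, (m : R) * (c i * g (m + t i)) =
      c i * firstMoment (fun m => g (m + t i)) := by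
    rw [firstMoment, mul_finsum' _ _ (by fun_prop (disch := exact add_left_injective _))]
    simp only [mul_left_comm]
  rw [hshift, firstMoment_comp_add_right hg]
  ring

end

theorem firstMoment_eq_four_mul_of_lifting {K : Type*} [Field K] [CharZero K]
    {ι κ : Type*} [Fintype ι] [Fintype κ] {lam γ lam' : ℤ → K}
    (hlam : lam.HasFiniteSupport)
    (c : ι → K) (t : ι → ℤ) (d : κ → K) (s : κ → ℤ)
    (hγ : γ = (fun k => lam (2 * k + 1)) + shiftCombination c t (fun k => lam (2 * k)))
    (hlam' : lam' = (fun k => lam (2 * k)) + shiftCombination d s γ)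
    (hc₀ : ∑ i, c i = -1) (hc₁ : ∑ i, c i * t i = -1 / 2)
    (hd₀ : ∑ j, d j = 1 / 2) (hd₁ : ∑ j, d j * s j = -1 / 4) :
    firstMoment lam = 4 * firstMoment lam' := by
  set e : ℤ → K := fun k => lam (2 * k)
  set o : ℤ → K := fun k => lam (2 * k + 1)
  have he : e.HasFiniteSupport := by fun_prop (disch := intro a b h; simp_all)
  have ho : o.HasFiniteSupport := by fun_prop (disch := intro a b h; simp_all)
  have hγfin : γ.HasFiniteSupport := by
    rw [hγ]; exact ho.add (hasFiniteSupport_shiftCombination _ _ he)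
  have hγ₀ : ∑ᶠ m, γ m = ∑ᶠ m, o m - ∑ᶠ m, e m := by
    rw [hγ]
    simp only [Pi.add_apply]
    rw [finsum_add_distrib ho (hasFiniteSupport_shiftCombination _ _ he),
      finsum_shiftCombination _ _ he, hc₀]
    ring
  have hγ₁ : firstMoment γ = firstMoment o - firstMoment e + (∑ᶠ m, e m) / 2 := by
    rw [hγ, firstMoment_add ho (hasFiniteSupport_shiftCombination _ _ he),
      firstMoment_shiftCombination _ _ he, hc₀, hc₁]
    ring
  have hlam'₁ : firstMoment lam' = firstMoment e + firstMoment γ / 2 + (∑ᶠ m, γ m) / 4 := by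
    rw [hlam', firstMoment_add he (hasFiniteSupport_shiftCombination _ _ hγfin),
      firstMoment_shiftCombination _ _ hγfin, hd₀, hd₁]
    ring
  rw [firstMoment_eq_even_add_odd hlam, hlam'₁, hγ₁, hγ₀]
  ring

/-- Conservation of the first discrete moment across levels by the lifted
sixth-order (6.2) interpolating wavelet. -/
theorem wavelet_6_2_conserves_first_moment
    (lam : ℤ → ℝ) (hfin : (Function.support lam).Finite)
    (γ : ℤ → ℝ)
    (hγ : ∀ m : ℤ, γ m =
      lam (2 * m + 1) - (3 / 256) * lam (2 * m - 4) + (25 / 256) * lam (2 * m - 2)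
        - (75 / 128) * lam (2 * m) - (75 / 128) * lam (2 * m + 2)
        + (25 / 256) * lam (2 * m + 4) - (3 / 256) * lam (2 * m + 6))
    (lam' : ℤ → ℝ)
    (hlam' : ∀ k : ℤ, lam' k =
      lam (2 * k) + (3 / 512) * γ (k + 2) - (25 / 512) * γ (k + 1)
        + (75 / 256) * γ k + (75 / 256) * γ (k - 1)
        - (25 / 512) * γ (k - 2) + (3 / 512) * γ (k - 3)) :
    ∑ᶠ j : ℤ, (j : ℝ) * lam j = 4 * ∑ᶠ k : ℤ, (k : ℝ) * lam' k := by
  have hpredict : γ = (fun k => lam (2 * k + 1)) + shiftCombination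
      ![-3 / 256, 25 / 256, -75 / 128, -75 / 128, 25 / 256, -3 / 256] ![-2, -1, 0, 1, 2, 3]
      (fun k => lam (2 * k)) := by
    funext m
    simp only [hγ, Pi.add_apply, shiftCombination, Fin.sum_univ_six, Matrix.cons_val_zero,
      Matrix.cons_val_one, Matrix.cons_val]
    ring_nf
  have hupdate : lam' = (fun k => lam (2 * k)) + shiftCombination
      ![3 / 512, -25 / 512, 75 / 256, 75 / 256, -25 / 512, 3 / 512] ![2, 1, 0, -1, -2, -3] γ := by
    funext k
    simp only [hlam', Pi.add_apply, shiftCombination, Fin.sum_univ_six, Matrix.cons_val_zero,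
      Matrix.cons_val_one, Matrix.cons_val]
    ring_nf
  refine firstMoment_eq_four_mul_of_lifting hfin _ _ _ _ hpredict hupdate ?_ ?_ ?_ ?_ <;>
    simp only [Fin.sum_univ_six, Matrix.cons_val_zero, Matrix.cons_val_one, Matrix.cons_val] <;>
    norm_num
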